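/- arXiv:2410.02476 — 6 statements merged into one kernel-verified Lean document; each statement's English description precedes it below -/
import Mathlib

section
/- Let C ⊆ ℝ^d be a closed convex set with 0 in its interior, and let γ_C(u) = inf{λ ≥ 0 : u ∈ λC} be its Gauge function. Then for any w ∈ ℝ^d with w ∉ C, the point w/γ_C(w) is a minimizer of x ↦ γ_C(w - x) over x ∈ C; and if w ∈ C, then w itself is such a minimizer. -/
open scoped RealInnerProductSpace

/-- If `w ∉ C` then `w / γ_C(w)` is a minimizer of `x ↦ γ_C(w - x)` over `C`,
and if `w ∈ C` then `w` itself is such a minimizer. -/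
theorem gauge_projection_formula {d : ℕ} (C : Set (EuclideanSpace ℝ (Fin d)))
    (hconv : Convex ℝ C) (hclosed : IsClosed C)
    (h0 : (0 : EuclideanSpace ℝ (Fin d)) ∈ interior C)
    (w : EuclideanSpace ℝ (Fin d)) :
    (w ∉ C → (gauge C w)⁻¹ • w ∈ C ∧
      ∀ x ∈ C, gauge C (w - (gauge C w)⁻¹ • w) ≤ gauge C (w - x)) ∧
    (w ∈ C → ∀ x ∈ C, gauge C (w - w) ≤ gauge C (w - x)) := by
  have hnhds : C ∈ nhds (0 : EuclideanSpace ℝ (Fin d)) := mem_interior_iff_mem_nhds.mp h0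
  have habs : Absorbent ℝ C := absorbent_nhds_zero hnhds
  have hmem : ∀ u : EuclideanSpace ℝ (Fin d), gauge C u ≤ 1 → u ∈ C := by
    intro u hu
    have := (gauge_le_one_iff_mem_closure hconv hnhds).mp hu
    rwa [hclosed.closure_eq] at this
  constructor
  · intro hw
    have hg1 : 1 < gauge C w := by
      by_contra h
      exact hw (hmem w (le_of_not_gt h))
    have hgpos : 0 < gauge C w := lt_trans one_pos hg1
    have hmem' : (gauge C w)⁻¹ • w ∈ C := by
      apply hmem
      rw [gauge_smul_of_nonneg (inv_nonneg.mpr hgpos.le), smul_eq_mul,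
        inv_mul_cancel₀ hgpos.ne']
    refine ⟨hmem', fun x hx => ?_⟩
    have heq : w - (gauge C w)⁻¹ • w = (1 - (gauge C w)⁻¹) • w := by
      rw [sub_smul, one_smul]
    have hinv : (gauge C w)⁻¹ ≤ 1 := by
      rw [inv_le_one₀ hgpos]; exact hg1.le
    have hval : gauge C (w - (gauge C w)⁻¹ • w) = gauge C w - 1 := by
      rw [heq, gauge_smul_of_nonneg (by linarith : (0:ℝ) ≤ 1 - (gauge C w)⁻¹),
        smul_eq_mul, sub_mul, one_mul, inv_mul_cancel₀ hgpos.ne']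
    rw [hval]
    have hsub : gauge C w ≤ gauge C (w - x) + gauge C x := by
      have := gauge_add_le hconv habs (w - x) x
      rwa [sub_add_cancel] at this
    have hx1 : gauge C x ≤ 1 := gauge_le_one_of_mem hx
    linarith
  · intro _ x _
    simp [gauge_nonneg]
end

section
/- Let C ⊆ ℝ^d be a closed convex set with 0 in its interior. Then the Gauge distance S_C(w) := inf_{x ∈ C} γ_C(w - x) satisfies S_C(w) = max(0, γ_C(w) - 1) for all w ∈ ℝ^d. -/
/-!
The triangle inequality for the gauge gives `γ(w) ≤ γ(w - x) + γ(x) ≤ γ(w - x) + 1` for every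
`x ∈ C`, so `max 0 (γ(w) - 1)` is a lower bound. It is attained at the radial projection
`x = (max 1 γ(w))⁻¹ • w` of `w` onto `{γ ≤ 1}`, which is `C` because `C` is closed and convex.
-/

open Filter Topology

section Gauge

variable {E : Type*} [AddCommGroup E] [Module ℝ E] {s : Set E}

theorem gauge_sub_one_le_gauge_sub (hs : Convex ℝ s) (ha : Absorbent ℝ s) (w : E) {x : E}
    (hx : x ∈ s) : gauge s w - 1 ≤ gauge s (w - x) := by
  have htriangle := gauge_add_le hs ha (w - x) x
  rw [sub_add_cancel] at htriangle
  linarith [gauge_le_one_of_mem hx]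

theorem gauge_inv_max_one_smul_le_one (w : E) :
    gauge s ((max 1 (gauge s w))⁻¹ • w) ≤ 1 := by
  have hm : 0 < max 1 (gauge s w) := lt_max_of_lt_left one_pos
  rw [gauge_smul_of_nonneg (inv_nonneg.2 hm.le), smul_eq_mul, inv_mul_le_iff₀ hm, mul_one]
  exact le_max_right _ _

theorem gauge_sub_inv_max_one_smul (w : E) :
    gauge s (w - (max 1 (gauge s w))⁻¹ • w) = max 0 (gauge s w - 1) := by
  have hm : 1 ≤ max 1 (gauge s w) := le_max_left _ _
  have hcoef : 0 ≤ 1 - (max 1 (gauge s w))⁻¹ := sub_nonneg.2 (inv_le_one_of_one_le₀ hm)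
  rw [show w - (max 1 (gauge s w))⁻¹ • w = (1 - (max 1 (gauge s w))⁻¹) • w by
    rw [sub_smul, one_smul], gauge_smul_of_nonneg hcoef, smul_eq_mul]
  rcases le_total (gauge s w) 1 with hw | hw
  · rw [max_eq_left hw, max_eq_left (by linarith)]
    simp
  · rw [max_eq_right hw, max_eq_right (by linarith)]
    field_simp [(zero_lt_one.trans_le hw).ne']

variable [TopologicalSpace E] [IsTopologicalAddGroup E] [ContinuousSMul ℝ E]

theorem mem_of_gauge_le_one (hs : Convex ℝ s) (hcl : IsClosed s) (hs₀ : s ∈ 𝓝 0) {x : E}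
    (hx : gauge s x ≤ 1) : x ∈ s :=
  hcl.closure_eq ▸ (gauge_le_one_iff_mem_closure hs hs₀).1 hx

theorem isLeast_image_gauge_sub (hs : Convex ℝ s) (hcl : IsClosed s) (hs₀ : s ∈ 𝓝 0) (w : E) :
    IsLeast ((fun x => gauge s (w - x)) '' s) (max 0 (gauge s w - 1)) := by
  refine ⟨⟨_, mem_of_gauge_le_one hs hcl hs₀ (gauge_inv_max_one_smul_le_one w),
    gauge_sub_inv_max_one_smul w⟩, ?_⟩
  rintro _ ⟨x, hx, rfl⟩
  exact max_le (gauge_nonneg _) (gauge_sub_one_le_gauge_sub hs (absorbent_nhds_zero hs₀) w hx)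

end Gauge

/-- The Gauge distance `S_C(w) = inf_{x ∈ C} γ_C(w - x)` equals `max 0 (γ_C(w) - 1)`. -/
theorem gauge_dist_eq {d : ℕ} (C : Set (EuclideanSpace ℝ (Fin d)))
    (hconv : Convex ℝ C) (hclosed : IsClosed C)
    (h0 : (0 : EuclideanSpace ℝ (Fin d)) ∈ interior C)
    (w : EuclideanSpace ℝ (Fin d)) :
    sInf ((fun x => gauge C (w - x)) '' C) = max 0 (gauge C w - 1) :=
  (isLeast_image_gauge_sub hconv hclosed (mem_interior_iff_mem_nhds.1 h0) w).csInf_eq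
end

section
/- Let C ⊆ ℝ^d be a closed convex set with 0 in its interior, and w ∉ C. Then any s ∈ argmax_{x ∈ C°} ⟨x, w⟩ (where C° is the polar of C) is a subgradient of the Gauge distance function S_C at w, i.e., S_C(u) ≥ S_C(w) + ⟨s, u - w⟩ for all u ∈ ℝ^d. -/
open scoped RealInnerProductSpace

/-- Polar set of `C`. -/
def polarSet {d : ℕ} (C : Set (EuclideanSpace ℝ (Fin d))) : Set (EuclideanSpace ℝ (Fin d)) :=
  {x | ∀ y ∈ C, ⟪x, y⟫ ≤ 1}

/-- Gauge distance function `S_C(w) = inf_{x ∈ C} γ_C(w - x)`. -/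
noncomputable def gaugeDist {d : ℕ} (C : Set (EuclideanSpace ℝ (Fin d)))
    (w : EuclideanSpace ℝ (Fin d)) : ℝ :=
  sInf ((fun x => gauge C (w - x)) '' C)

lemma inner_le_gauge_of_mem_polar {d : ℕ} {C : Set (EuclideanSpace ℝ (Fin d))}
    (h0 : (0 : EuclideanSpace ℝ (Fin d)) ∈ interior C)
    {s : EuclideanSpace ℝ (Fin d)} (hs : s ∈ polarSet C)
    (u : EuclideanSpace ℝ (Fin d)) : ⟪s, u⟫ ≤ gauge C u := by
  have habs : Absorbent ℝ C :=
    absorbent_nhds_zero (mem_interior_iff_mem_nhds.mp h0)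
  refine le_csInf habs.gauge_set_nonempty ?_
  rintro r ⟨hr, y, hy, rfl⟩
  have := hs y hy
  calc ⟪s, r • y⟫ = r * ⟪s, y⟫ := real_inner_smul_right _ _ _
    _ ≤ r * 1 := by nlinarith
    _ = r := mul_one r

/-- Any maximizer `s` of `x ↦ ⟪x, w⟫` over the polar `C°` is a subgradient of the
Gauge distance function `S_C` at `w ∉ C`. -/
theorem gauge_dist_subgradient {d : ℕ} (C : Set (EuclideanSpace ℝ (Fin d)))
    (hconv : Convex ℝ C) (hclosed : IsClosed C)
    (h0 : (0 : EuclideanSpace ℝ (Fin d)) ∈ interior C)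
    (w : EuclideanSpace ℝ (Fin d)) (hw : w ∉ C)
    (s : EuclideanSpace ℝ (Fin d)) (hs : s ∈ polarSet C)
    (hmax : ∀ x ∈ polarSet C, ⟪x, w⟫ ≤ ⟪s, w⟫) :
    ∀ u : EuclideanSpace ℝ (Fin d), gaugeDist C w + ⟪s, u - w⟫ ≤ gaugeDist C u := by
  intro u
  have hnhds : C ∈ nhds 0 := mem_interior_iff_mem_nhds.mp h0
  have h0C : (0 : EuclideanSpace ℝ (Fin d)) ∈ C := interior_subset h0
  have habs : Absorbent ℝ C := absorbent_nhds_zero hnhds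
  have hcl : closure C = C := hclosed.closure_eq
  -- gauge w > 1
  have hgw1 : 1 < gauge C w := by
    by_contra h
    exact hw (by rw [← hcl]; exact (gauge_le_one_iff_mem_closure hconv hnhds).1 (not_lt.1 h))
  -- gauge w ≤ ⟪s, w⟫
  have key : ∀ t : ℝ, 0 < t → t < gauge C w → t < ⟪s, w⟫ := by
    intro t ht htg
    set z := t⁻¹ • w with hz
    have hzC : z ∉ C := by
      intro hzC
      have := gauge_le_one_of_mem hzC
      rw [hz, gauge_smul_of_nonneg (by positivity : (0:ℝ) ≤ t⁻¹), smul_eq_mul] at this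
      rw [inv_mul_le_iff₀ ht, mul_one] at this
      linarith
    obtain ⟨f, c, hfC, hfz⟩ := geometric_hahn_banach_closed_point hconv hclosed hzC
    have hc0 : 0 < c := by have := hfC 0 h0C; simpa using this
    set x := c⁻¹ • (InnerProductSpace.toDual ℝ _).symm f with hx
    have hxy : ∀ y, ⟪x, y⟫ = c⁻¹ * f y := by
      intro y
      rw [hx, real_inner_smul_left, InnerProductSpace.toDual_symm_apply]
    have hxpolar : x ∈ polarSet C := by
      intro y hy
      rw [hxy]
      rw [inv_mul_le_iff₀ hc0]
      nlinarith [hfC y hy]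
    have hxw : t < ⟪x, w⟫ := by
      have h1 : 1 < ⟪x, z⟫ := by
        rw [hxy, lt_inv_mul_iff₀ hc0, mul_one]; exact hfz
      have h2 : ⟪x, z⟫ = t⁻¹ * ⟪x, w⟫ := by rw [hz, real_inner_smul_right]
      rw [h2, lt_inv_mul_iff₀ ht, mul_one] at h1
      exact h1
    exact lt_of_lt_of_le hxw (hmax x hxpolar)
  have hsw_ge : gauge C w ≤ ⟪s, w⟫ := by
    refine le_of_forall_lt fun c hc => ?_
    have h1 : max c 1 < gauge C w := max_lt hc hgw1
    have := key (max c 1) (lt_of_lt_of_le one_pos (le_max_right c 1)) h1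
    exact lt_of_le_of_lt (le_max_left c 1) this
  have hsw_le : ⟪s, w⟫ ≤ gauge C w := inner_le_gauge_of_mem_polar h0 hs w
  have hsw : ⟪s, w⟫ = gauge C w := le_antisymm hsw_le hsw_ge
  -- lower bound: gauge u - 1 ≤ gaugeDist C u
  have hlb : gauge C u - 1 ≤ gaugeDist C u := by
    refine le_csInf ⟨gauge C (u - 0), 0, h0C, rfl⟩ ?_
    rintro r ⟨x, hxC, rfl⟩
    have h1 : gauge C u ≤ gauge C (u - x) + gauge C x := by
      have := gauge_add_le hconv habs (u - x) x
      simpa using this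
    have h2 : gauge C x ≤ 1 := gauge_le_one_of_mem hxC
    simp only []
    linarith
  -- upper bound: gaugeDist C w ≤ gauge C w - 1
  have hub : gaugeDist C w ≤ gauge C w - 1 := by
    set g := gauge C w with hg
    have hg0 : 0 < g := lt_trans one_pos hgw1
    set x := g⁻¹ • w with hx
    have hxC : x ∈ C := by
      rw [← hcl]
      refine (gauge_le_one_iff_mem_closure hconv hnhds).1 ?_
      rw [hx, gauge_smul_of_nonneg (by positivity : (0:ℝ) ≤ g⁻¹), smul_eq_mul, ← hg,
        inv_mul_cancel₀ hg0.ne']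
    have hsub : w - x = (1 - g⁻¹) • w := by
      rw [sub_smul, one_smul, hx]
    have hval : gauge C (w - x) = g - 1 := by
      rw [hsub, gauge_smul_of_nonneg (by
        have : g⁻¹ ≤ 1 := by rw [inv_le_one_iff₀]; right; linarith
        linarith : (0:ℝ) ≤ 1 - g⁻¹), smul_eq_mul, ← hg]
      field_simp
    have : gaugeDist C w ≤ gauge C (w - x) :=
      csInf_le ⟨0, by rintro r ⟨y, _, rfl⟩; exact gauge_nonneg _⟩ ⟨x, hxC, rfl⟩
    rw [hval] at this
    exact this
  have hsu : ⟪s, u⟫ ≤ gauge C u := inner_le_gauge_of_mem_polar h0 hs u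
  rw [inner_sub_right]
  linarith
end

section
/- Let ν, R > 0 and define Ψ(x) := -ν·log(R² - ‖x‖²) on the open Euclidean ball of radius R in ℝ^d, with Hessian ∇²Ψ(w) = (2ν/(R²-‖w‖²))·I + (4ν/(R²-‖w‖²)²)·w wᵀ. Then for any u, w in the open ball of radius R, (1/ν)·‖w - u‖²_{∇²Ψ(w)} ≥ (‖w‖² - ‖u‖²)²/(R² - ‖w‖²)², where ‖v‖²_A := vᵀ A v. -/
open scoped RealInnerProductSpace

/-- For the log-barrier `Ψ(x) = -ν log(R² - ‖x‖²)` of the ball `B(R)`, with Hessian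
`∇²Ψ(w) = (2ν/(R²-‖w‖²)) I + (4ν/(R²-‖w‖²)²) w wᵀ`, we have
`(1/ν) ‖w - u‖²_{∇²Ψ(w)} ≥ (‖w‖² - ‖u‖²)² / (R² - ‖w‖²)²`. -/
theorem barrier_hessian_lower_bound {d : ℕ} (ν R : ℝ) (hν : 0 < ν) (hR : 0 < R)
    (u w : EuclideanSpace ℝ (Fin d)) (hu : ‖u‖ < R) (hw : ‖w‖ < R) :
    (‖w‖ ^ 2 - ‖u‖ ^ 2) ^ 2 / (R ^ 2 - ‖w‖ ^ 2) ^ 2 ≤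
      (1 / ν) * ((2 * ν / (R ^ 2 - ‖w‖ ^ 2)) * ‖w - u‖ ^ 2 +
        (4 * ν / (R ^ 2 - ‖w‖ ^ 2) ^ 2) * ⟪w, w - u⟫ ^ 2) := by
  have hs : 0 < R ^ 2 - ‖w‖ ^ 2 := by nlinarith [norm_nonneg w]
  have hb : ‖u‖ ^ 2 < R ^ 2 := by nlinarith [norm_nonneg u]
  have h1 : ‖w - u‖ ^ 2 = ‖w‖ ^ 2 - 2 * ⟪w, u⟫ + ‖u‖ ^ 2 := by
    rw [norm_sub_sq_real]
  have h2 : ⟪w, w - u⟫ = ‖w‖ ^ 2 - ⟪w, u⟫ := by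
    rw [inner_sub_right, real_inner_self_eq_norm_sq]
  have hp : 2 * ⟪w, u⟫ ≤ ‖w‖ ^ 2 + ‖u‖ ^ 2 := by
    nlinarith [sq_nonneg ‖w - u‖, h1]
  rw [h1, h2]
  have hrhs : 1 / ν *
      (2 * ν / (R ^ 2 - ‖w‖ ^ 2) * (‖w‖ ^ 2 - 2 * ⟪w, u⟫ + ‖u‖ ^ 2) +
        4 * ν / (R ^ 2 - ‖w‖ ^ 2) ^ 2 * (‖w‖ ^ 2 - ⟪w, u⟫) ^ 2) =
      (2 * (R ^ 2 - ‖w‖ ^ 2) * (‖w‖ ^ 2 - 2 * ⟪w, u⟫ + ‖u‖ ^ 2) +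
        4 * (‖w‖ ^ 2 - ⟪w, u⟫) ^ 2) / (R ^ 2 - ‖w‖ ^ 2) ^ 2 := by
    field_simp
  rw [hrhs, div_le_div_iff₀ (pow_pos hs 2) (pow_pos hs 2)]
  nlinarith [sq_nonneg (‖w‖ ^ 2 - 2 * ⟪w, u⟫ + ‖u‖ ^ 2), sq_nonneg ‖w - u‖, h1,
    mul_nonneg (le_of_lt hs) (sub_nonneg.2 hp), mul_pos hs hs, sq_nonneg (R ^ 2 - ‖w‖ ^ 2),
    mul_nonneg (mul_nonneg (le_of_lt hs) (le_of_lt hs)) (sub_nonneg.2 hp),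
    mul_nonneg (mul_nonneg (le_of_lt hs) (le_of_lt hs)) (by nlinarith [sq_nonneg ‖w - u‖, h1] : (0:ℝ) ≤ ‖w‖ ^ 2 - 2 * ⟪w, u⟫ + ‖u‖ ^ 2)]
end

section
/- Let η ≤ 1/(5 G̃ R) and ν ≥ 10 G̃ R with η, ν, R, G̃ > 0, and let g ∈ ℝ^d with ‖g‖ ≤ G̃ and y in the open ball of radius R. Define Ψ(x) = -ν log(R² - ‖x‖²). Then η·g gᵀ ⪯ (1/10)·∇²Ψ(y), i.e., for every vector v, η·⟨g, v⟩² ≤ (1/10)·vᵀ∇²Ψ(y)v. -/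
open scoped RealInnerProductSpace

/-- If `η ≤ 1/(5 G̃ R)` and `ν ≥ 10 G̃ R`, then `η g gᵀ ⪯ (1/10) ∇²Ψ(y)` for any `‖g‖ ≤ G̃`
and `y` in the open ball of radius `R`, where `Ψ(x) = -ν log(R² - ‖x‖²)`. -/
theorem grad_outer_le_hessian {d : ℕ} (η ν R Gt : ℝ)
    (hη : 0 < η) (hν : 0 < ν) (hR : 0 < R) (hG : 0 < Gt)
    (hη2 : η ≤ 1 / (5 * Gt * R)) (hν2 : 10 * Gt * R ≤ ν)
    (g y : EuclideanSpace ℝ (Fin d)) (hg : ‖g‖ ≤ Gt) (hy : ‖y‖ < R) :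
    ∀ v : EuclideanSpace ℝ (Fin d),
      η * ⟪g, v⟫ ^ 2 ≤ (1 / 10) * ((2 * ν / (R ^ 2 - ‖y‖ ^ 2)) * ‖v‖ ^ 2 +
        (4 * ν / (R ^ 2 - ‖y‖ ^ 2) ^ 2) * ⟪y, v⟫ ^ 2) := by
  intro v
  have hD : 0 < R ^ 2 - ‖y‖ ^ 2 := by nlinarith [norm_nonneg y]
  have hD2 : R ^ 2 - ‖y‖ ^ 2 ≤ R ^ 2 := by nlinarith [norm_nonneg y]
  have hcs : ⟪g, v⟫ ^ 2 ≤ Gt ^ 2 * ‖v‖ ^ 2 := by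
    calc ⟪g, v⟫ ^ 2 = |⟪g, v⟫| ^ 2 := (sq_abs _).symm
      _ ≤ (‖g‖ * ‖v‖) ^ 2 := pow_le_pow_left₀ (abs_nonneg _) (abs_real_inner_le_norm g v) 2
      _ ≤ (Gt * ‖v‖) ^ 2 := pow_le_pow_left₀ (by positivity)
          (mul_le_mul_of_nonneg_right hg (norm_nonneg v)) 2
      _ = Gt ^ 2 * ‖v‖ ^ 2 := by ring
  have hη3 : η * (5 * Gt * R) ≤ 1 := (le_div_iff₀ (by positivity)).mp hη2
  have hsecond : 0 ≤ (1 / 10) * ((4 * ν / (R ^ 2 - ‖y‖ ^ 2) ^ 2) * ⟪y, v⟫ ^ 2) := by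
    positivity
  have key : η * ⟪g, v⟫ ^ 2 ≤ (1 / 10) * ((2 * ν / (R ^ 2 - ‖y‖ ^ 2)) * ‖v‖ ^ 2) := by
    have heq : (1 / 10) * ((2 * ν / (R ^ 2 - ‖y‖ ^ 2)) * ‖v‖ ^ 2)
        = (ν * ‖v‖ ^ 2 / 5) / (R ^ 2 - ‖y‖ ^ 2) := by ring
    rw [heq, le_div_iff₀ hD]
    have h1 : η * ⟪g, v⟫ ^ 2 ≤ η * (Gt ^ 2 * ‖v‖ ^ 2) :=
      mul_le_mul_of_nonneg_left hcs hη.le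
    have h2 : η * ⟪g, v⟫ ^ 2 * (R ^ 2 - ‖y‖ ^ 2) ≤ η * (Gt ^ 2 * ‖v‖ ^ 2) * (R ^ 2 - ‖y‖ ^ 2) :=
      mul_le_mul_of_nonneg_right h1 hD.le
    have h3 : η * (Gt ^ 2 * ‖v‖ ^ 2) * (R ^ 2 - ‖y‖ ^ 2) ≤ η * (Gt ^ 2 * ‖v‖ ^ 2) * R ^ 2 :=
      mul_le_mul_of_nonneg_left hD2 (by positivity)
    nlinarith [sq_nonneg ‖v‖, mul_nonneg (mul_nonneg hG.le hR.le) (sq_nonneg ‖v‖),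
      mul_le_mul_of_nonneg_right hη3 (mul_nonneg (mul_nonneg hG.le hR.le) (sq_nonneg ‖v‖)),
      mul_le_mul_of_nonneg_right hν2 (sq_nonneg ‖v‖)]
  calc η * ⟪g, v⟫ ^ 2 ≤ (1 / 10) * ((2 * ν / (R ^ 2 - ‖y‖ ^ 2)) * ‖v‖ ^ 2) := key
    _ ≤ _ := by linarith
end

section
/- Let α₁,…,α_m ∈ [0, 1/2] with Σ_k α_k ≤ 1/2 and c ∈ (0,1). If Π_{k=1}^m (1 + α_k) ≥ 1 + c, then Σ_{k=1}^m α_k ≥ c/4. -/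
/-- If `α_k ∈ [0, 1/2]` with `Σ α_k ≤ 1/2`, `c ∈ (0,1)`, and `Π (1 + α_k) ≥ 1 + c`,
then `Σ α_k ≥ c/4`. -/
theorem prod_ge_imp_sum_ge {m : ℕ} (c : ℝ) (hc : c ∈ Set.Ioo (0 : ℝ) 1)
    (α : Fin m → ℝ) (hα : ∀ k, α k ∈ Set.Icc (0 : ℝ) (1 / 2))
    (hsum : ∑ k, α k ≤ 1 / 2) (hprod : 1 + c ≤ ∏ k, (1 + α k)) :
    c / 4 ≤ ∑ k, α k := by
  set S := ∑ k, α k with hS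
  have hS0 : 0 ≤ S := Finset.sum_nonneg fun k _ => (hα k).1
  have h1 : (∏ k, (1 + α k)) ≤ Real.exp S := by
    rw [hS, Real.exp_sum]
    exact Finset.prod_le_prod (fun k _ => by linarith [(hα k).1])
      (fun k _ => by linarith [Real.add_one_le_exp (α k)])
  have h2 : Real.exp S ≤ 1 / (1 - S) := by
    have hpos : 0 < 1 - S := by linarith
    have := Real.add_one_le_exp (-S)
    rw [le_div_iff₀ hpos]
    calc Real.exp S * (1 - S) ≤ Real.exp S * Real.exp (-S) := by
          nlinarith [Real.exp_pos S]
      _ = 1 := by rw [← Real.exp_add]; simp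
  have h3 : 1 / (1 - S) ≤ 1 + 2 * S := by
    rw [div_le_iff₀ (by linarith)]
    nlinarith
  have : c ≤ 2 * S := by linarith
  linarith [hc.1]
end
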